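/- In the icl=2 gadget construction, the Γ-cycles of (G,V) are exactly the following, for each triple t_i=(x,y,z) ∈ T: the six international length-2 cycles ⟨x,a_i^1⟩, ⟨y,a_i^3⟩, ⟨z,a_i^5⟩, ⟨a_i^1,a_i^2⟩, ⟨a_i^3,a_i^4⟩, ⟨a_i^5,a_i^6⟩, and the national length-3 cycle ⟨a_i^2,a_i^4,a_i^6⟩; in particular, every Γ-cycle is contained within a single gadget. -/

import Mathlib

open scoped Classical

/-- An `n`-partitioned compatibility graph: a finite directed graph on a finite
set of natural-number vertices, without self-loops, whose vertex set is
partitioned into `n` nonempty countries. -/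
structure PartGraph (n : ℕ) where
  verts : Finset ℕ
  arcs : Finset (ℕ × ℕ)
  arcs_mem : ∀ p ∈ arcs, p.1 ∈ verts ∧ p.2 ∈ verts
  no_loops : ∀ v, (v, v) ∉ arcs
  country : ℕ → Fin n
  country_nonempty : ∀ i : Fin n, ∃ v ∈ verts, country v = i

/-- Cyclic access to the entries of a list. -/
def cyc (l : List ℕ) (k : ℕ) : ℕ := l.getD (k % l.length) 0

/-- `l` is a (directed) cycle of `G`: a cyclic sequence of at least two distinct
vertices, consecutive ones (cyclically) joined by arcs. -/
def IsCycle {n : ℕ} (G : PartGraph n) (l : List ℕ) : Prop :=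
  2 ≤ l.length ∧ l.Nodup ∧ (∀ v ∈ l, v ∈ G.verts) ∧
    ∀ k < l.length, (cyc l k, cyc l (k + 1)) ∈ G.arcs

/-- All vertices of `l` belong to country `i`. -/
def IsNationalTo {n : ℕ} (G : PartGraph n) (l : List ℕ) (i : Fin n) : Prop :=
  ∀ v ∈ l, G.country v = i

/-- A national cycle: all vertices in one country. -/
def IsNational {n : ℕ} (G : PartGraph n) (l : List ℕ) : Prop :=
  ∃ i, IsNationalTo G l i

/-- An international cycle: not national (equivalently, for cycles, it contains
an international arc). -/
def IsInternational {n : ℕ} (G : PartGraph n) (l : List ℕ) : Prop :=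
  ¬ IsNational G l

/-- Position `k` (taken cyclically) is the start of a `V_i`-segment of `l`:
the vertex there is in country `i` but the cyclically preceding one is not. -/
def segStart {n : ℕ} (G : PartGraph n) (l : List ℕ) (i : Fin n) (k : ℕ) : Prop :=
  G.country (cyc l k) = i ∧ G.country (cyc l (k + l.length - 1)) ≠ i

/-- The size of the run of consecutive (cyclic) positions of `l`, starting at
position `k`, whose vertices are in country `i`.  At a segment start this is
exactly the size of that `V_i`-segment. -/
noncomputable def runLen {n : ℕ} (G : PartGraph n) (l : List ℕ) (i : Fin n) (k : ℕ) : ℕ :=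
  ((Finset.range l.length).filter
    fun j => ∀ j' ≤ j, G.country (cyc l (k + j')) = i).card

/-- The number of `V_i`-segments of the cycle `l`. -/
noncomputable def numSegs {n : ℕ} (G : PartGraph n) (l : List ℕ) (i : Fin n) : ℕ :=
  ((Finset.range l.length).filter fun k => segStart G l i k).card

/-- A set `Γ` of country-specific parameters for `n` countries. -/
structure Params (n : ℕ) where
  icl : ℕ∞
  ncl : Fin n → ℕ∞
  iss : Fin n → ℕ∞
  isn : Fin n → ℕ∞
  icl_ne_one : icl ≠ 1
  ncl_ne_one : ∀ i, ncl i ≠ 1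
  iss_pos : ∀ i, 1 ≤ iss i
  isn_pos : ∀ i, 1 ≤ isn i

/-- `l` is a `Γ`-cycle of `(G, 𝒱)`. -/
def IsGammaCycle {n : ℕ} (G : PartGraph n) (Γ : Params n) (l : List ℕ) : Prop :=
  IsCycle G l ∧
    ((∃ i, IsNationalTo G l i ∧ (l.length : ℕ∞) ≤ Γ.ncl i) ∨
      (IsInternational G l ∧ (l.length : ℕ∞) ≤ Γ.icl ∧
        (∀ i, ∀ k < l.length, segStart G l i k → (runLen G l i k : ℕ∞) ≤ Γ.iss i) ∧
        (∀ i, (numSegs G l i : ℕ∞) ≤ Γ.isn i)))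

/-- A cycle packing of `G`: a set of pairwise vertex-disjoint cycles. -/
def IsPacking {n : ℕ} (G : PartGraph n) (P : Finset (List ℕ)) : Prop :=
  (∀ l ∈ P, IsCycle G l) ∧
    ∀ l ∈ P, ∀ l' ∈ P, l ≠ l' → ∀ v ∈ l, v ∉ l'

/-- The size of a cycle packing: total number of arcs (= vertices) of its cycles. -/
def packSize (P : Finset (List ℕ)) : ℕ := ∑ l ∈ P, l.length

/-- A `Γ`-cycle packing of `(G, 𝒱)`. -/
def IsGammaPackingG {n : ℕ} (G : PartGraph n) (Γ : Params n) (P : Finset (List ℕ)) : Prop :=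
  IsPacking G P ∧ ∀ l ∈ P, IsGammaCycle G Γ l


/-- The arcs of the `icl = 2` gadget associated with a triple `t = (x,y,z)`;
`a t 0, …, a t 5` are the fresh vertices `a_i^1, …, a_i^6`. -/
def gadgetArcs2 (a : ℕ × ℕ × ℕ → Fin 6 → ℕ) (t : ℕ × ℕ × ℕ) : Finset (ℕ × ℕ) :=
  [(t.1, a t 0), (a t 0, t.1), (t.2.1, a t 2), (a t 2, t.2.1), (t.2.2, a t 4), (a t 4, t.2.2),
   (a t 0, a t 1), (a t 1, a t 0), (a t 2, a t 3), (a t 3, a t 2), (a t 4, a t 5), (a t 5, a t 4),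
   (a t 1, a t 3), (a t 3, a t 5), (a t 5, a t 1)].toFinset

/-- The parameters `Γ = (2, icl = 2, ncl = (3,0), iss = (1,1), isn = (1,1))`. -/
def gadgetParams2 : Params 2 where
  icl := 2
  ncl := fun i => if i = 0 then 3 else 0
  iss := fun _ => 1
  isn := fun _ => 1
  icl_ne_one := by norm_num
  ncl_ne_one := by intro i; split <;> norm_num
  iss_pos := fun _ => le_refl _
  isn_pos := fun _ => le_refl _

/-! With `icl = 2`, an international Γ-cycle has length exactly 2; since `ncl = (3, 0)`, a national
one lies in `V₁` and has length 2 or 3. The only arcs inside `V₁` are the triangle arcs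
`aᵢ² → aᵢ⁴ → aᵢ⁶ → aᵢ²`, whose reversals are not arcs: hence there is no national 2-cycle and
every national 3-cycle is a triangle. An international 2-cycle uses a non-triangle arc of some
gadget, and such an arc and its reversal form one of the six listed 2-cycles. Conversely, each
listed cycle meets the Γ-bounds: a 2-cycle has one segment of size 1 in each country. -/

theorem List.isRotated_pair_iff {α : Type*} {l : List α} {x y : α} :
    l ~r [x, y] ↔ l = [x, y] ∨ l = [y, x] := by
  rw [← List.mem_cyclicPermutations_iff]
  simp [List.cyclicPermutations_cons]

theorem List.isRotated_triple_iff {α : Type*} {l : List α} {x y z : α} :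
    l ~r [x, y, z] ↔ l = [x, y, z] ∨ l = [y, z, x] ∨ l = [z, x, y] := by
  rw [← List.mem_cyclicPermutations_iff]
  simp [List.cyclicPermutations_cons]

section SmallCycles

variable {n : ℕ} (G : PartGraph n)

theorem isCycle_pair_iff {u v : ℕ} :
    IsCycle G [u, v] ↔ (u, v) ∈ G.arcs ∧ (v, u) ∈ G.arcs := by
  refine ⟨fun ⟨_, _, _, harc⟩ => ⟨by simpa [cyc] using harc 0 (by simp),
    by simpa [cyc] using harc 1 (by simp)⟩, fun ⟨huv, hvu⟩ => ⟨by simp, ?_, ?_, ?_⟩⟩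
  · simpa using fun h : u = v => G.no_loops v (h ▸ huv)
  · simpa using ⟨(G.arcs_mem _ huv).1, (G.arcs_mem _ huv).2⟩
  · intro k hk
    simp only [List.length_cons, List.length_nil] at hk
    interval_cases k <;> simpa [cyc]

theorem isCycle_triple_iff {u v w : ℕ} :
    IsCycle G [u, v, w] ↔ (u, v) ∈ G.arcs ∧ (v, w) ∈ G.arcs ∧ (w, u) ∈ G.arcs := by
  refine ⟨fun ⟨_, _, _, harc⟩ => ⟨by simpa [cyc] using harc 0 (by simp),
    by simpa [cyc] using harc 1 (by simp), by simpa [cyc] using harc 2 (by simp)⟩,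
    fun ⟨huv, hvw, hwu⟩ => ⟨by simp, ?_, ?_, ?_⟩⟩
  · have hne : ∀ {p q : ℕ}, (p, q) ∈ G.arcs → p ≠ q := fun h hpq => G.no_loops _ (hpq ▸ h)
    simpa using ⟨⟨hne huv, (hne hwu).symm⟩, hne hvw⟩
  · simpa using ⟨(G.arcs_mem _ huv).1, (G.arcs_mem _ hvw).1, (G.arcs_mem _ hwu).1⟩
  · intro k hk
    simp only [List.length_cons, List.length_nil] at hk
    interval_cases k <;> simpa [cyc]

theorem runLen_le_one {l : List ℕ} {i : Fin n} {k : ℕ}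
    (h : G.country (cyc l (k + 1)) ≠ i) : runLen G l i k ≤ 1 := by
  refine (Finset.card_le_card fun j hj => ?_).trans (Finset.card_singleton 0).le
  rw [Finset.mem_filter] at hj
  rw [Finset.mem_singleton]
  by_contra hj0
  exact h (hj.2 1 (Nat.one_le_iff_ne_zero.mpr hj0))

theorem numSegs_pair_le_one (u v : ℕ) (i : Fin n) : numSegs G [u, v] i ≤ 1 := by
  refine Finset.card_le_one.mpr fun k hk k' hk' => ?_
  simp only [Finset.mem_filter, Finset.mem_range, List.length_cons, List.length_nil] at hk hk'
  obtain ⟨hk, hsk⟩ := hk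
  obtain ⟨hk', hsk'⟩ := hk'
  interval_cases k <;> interval_cases k' <;> simp_all [segStart, cyc]

theorem isGammaCycle_pair (Γ : Params n) (hΓ : 2 ≤ Γ.icl) {u v : ℕ}
    (huv : (u, v) ∈ G.arcs) (hvu : (v, u) ∈ G.arcs) (hc : G.country u ≠ G.country v) :
    IsGammaCycle G Γ [u, v] := by
  refine ⟨(isCycle_pair_iff G).mpr ⟨huv, hvu⟩, Or.inr ⟨?_, by simpa using hΓ, ?_, ?_⟩⟩
  · rintro ⟨i, hi⟩
    exact hc ((hi u (by simp)).trans (hi v (by simp)).symm)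
  · intro i k _ hseg
    exact (Nat.cast_le.mpr (runLen_le_one G (by simpa using hseg.2))).trans (Γ.iss_pos i)
  · exact fun i => (Nat.cast_le.mpr (numSegs_pair_le_one G u v i)).trans (Γ.isn_pos i)

theorem isGammaCycle_triple (Γ : Params n) (i : Fin n) (hΓ : 3 ≤ Γ.ncl i) {u v w : ℕ}
    (huv : (u, v) ∈ G.arcs) (hvw : (v, w) ∈ G.arcs) (hwu : (w, u) ∈ G.arcs)
    (hc : IsNationalTo G [u, v, w] i) : IsGammaCycle G Γ [u, v, w] :=
  ⟨(isCycle_triple_iff G).mpr ⟨huv, hvw, hwu⟩, Or.inl ⟨i, hc, by simpa using hΓ⟩⟩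

theorem isGammaCycle_of_isRotated_pair (Γ : Params n) (hΓ : 2 ≤ Γ.icl) {u v : ℕ}
    (huv : (u, v) ∈ G.arcs) (hvu : (v, u) ∈ G.arcs) (hc : G.country u ≠ G.country v)
    {l : List ℕ} (hl : l ~r [u, v]) : IsGammaCycle G Γ l := by
  rcases List.isRotated_pair_iff.mp hl with rfl | rfl
  · exact isGammaCycle_pair G Γ hΓ huv hvu hc
  · exact isGammaCycle_pair G Γ hΓ hvu huv hc.symm

theorem isGammaCycle_of_isRotated_triple (Γ : Params n) (i : Fin n) (hΓ : 3 ≤ Γ.ncl i)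
    {u v w : ℕ} (huv : (u, v) ∈ G.arcs) (hvw : (v, w) ∈ G.arcs) (hwu : (w, u) ∈ G.arcs)
    (hc : IsNationalTo G [u, v, w] i) {l : List ℕ} (hl : l ~r [u, v, w]) :
    IsGammaCycle G Γ l := by
  have hc' : ∀ {l'}, l' ~r [u, v, w] → IsNationalTo G l' i :=
    fun h x hx => hc x (h.mem_iff.mp hx)
  rcases List.isRotated_triple_iff.mp hl with rfl | rfl | rfl
  · exact isGammaCycle_triple G Γ i hΓ huv hvw hwu hc
  · exact isGammaCycle_triple G Γ i hΓ hvw hwu huv (hc' hl)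
  · exact isGammaCycle_triple G Γ i hΓ hwu huv hvw (hc' hl)

end SmallCycles

theorem IsGammaCycle.gadgetParams2_cases {G : PartGraph 2} {l : List ℕ}
    (h : IsGammaCycle G gadgetParams2 l) :
    IsCycle G l ∧
      ((IsNationalTo G l 0 ∧ l.length ≤ 3) ∨ (IsInternational G l ∧ l.length = 2)) := by
  obtain ⟨hcyc, ⟨i, hnat, hlen⟩ | ⟨hint, hlen, -, -⟩⟩ := h
  · refine ⟨hcyc, Or.inl ?_⟩
    fin_cases i
    · exact ⟨hnat, by simpa [gadgetParams2] using hlen⟩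
    · have : l.length = 0 := by simpa [gadgetParams2] using hlen
      exact absurd hcyc.1 (by omega)
  · have : l.length ≤ 2 := by simpa [gadgetParams2] using hlen
    exact ⟨hcyc, Or.inr ⟨hint, by have := hcyc.1; omega⟩⟩

structure IsGadgetGraph2 (X Y Z : Finset ℕ) (T : Finset (ℕ × ℕ × ℕ))
    (a : ℕ × ℕ × ℕ → Fin 6 → ℕ) (G : PartGraph 2) : Prop where
  triple_mem : ∀ t ∈ T, t.1 ∈ X ∧ t.2.1 ∈ Y ∧ t.2.2 ∈ Z
  fresh : ∀ t ∈ T, ∀ j, a t j ∉ X ∪ Y ∪ Z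
  inj : ∀ t ∈ T, ∀ t' ∈ T, ∀ j j', a t j = a t' j' → t = t' ∧ j = j'
  arcs : G.arcs = T.biUnion fun t => gadgetArcs2 a t
  country : ∀ v, G.country v = if ∃ t ∈ T, v = a t 0 ∨ v = a t 2 ∨ v = a t 4 then 1 else 0

def IsGadgetCycle2 (a : ℕ × ℕ × ℕ → Fin 6 → ℕ) (t : ℕ × ℕ × ℕ) (l : List ℕ) : Prop :=
  l.IsRotated [t.1, a t 0] ∨ l.IsRotated [t.2.1, a t 2] ∨
    l.IsRotated [t.2.2, a t 4] ∨ l.IsRotated [a t 0, a t 1] ∨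
    l.IsRotated [a t 2, a t 3] ∨ l.IsRotated [a t 4, a t 5] ∨
    l.IsRotated [a t 1, a t 3, a t 5]

namespace IsGadgetGraph2

variable {X Y Z : Finset ℕ} {T : Finset (ℕ × ℕ × ℕ)} {a : ℕ × ℕ × ℕ → Fin 6 → ℕ}
  {G : PartGraph 2} {t : ℕ × ℕ × ℕ}

theorem country_eq_zero (hG : IsGadgetGraph2 X Y Z T a G) {v : ℕ} (hv : v ∈ X ∪ Y ∪ Z) :
    G.country v = 0 := by
  rw [hG.country, if_neg]
  rintro ⟨t, ht, h | h | h⟩ <;> exact hG.fresh t ht _ (h ▸ hv)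

theorem country_a (hG : IsGadgetGraph2 X Y Z T a G) (ht : t ∈ T) (j : Fin 6) :
    G.country (a t j) = if j ∈ ({0, 2, 4} : Finset (Fin 6)) then 1 else 0 := by
  rw [hG.country]
  congr 1
  refine propext ⟨?_, fun hj => ⟨t, ht, ?_⟩⟩
  · rintro ⟨t', ht', h | h | h⟩ <;> simp [(hG.inj t ht t' ht' _ _ h).2]
  · simp only [Finset.mem_insert, Finset.mem_singleton] at hj
    rcases hj with rfl | rfl | rfl <;> simp

theorem gadgetArcs2_subset (hG : IsGadgetGraph2 X Y Z T a G) (ht : t ∈ T) :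
    gadgetArcs2 a t ⊆ G.arcs :=
  hG.arcs ▸ Finset.subset_biUnion_of_mem (fun t => gadgetArcs2 a t) ht

theorem exists_of_mem_arcs (hG : IsGadgetGraph2 X Y Z T a G) {p : ℕ × ℕ}
    (hp : p ∈ G.arcs) : ∃ t ∈ T, p ∈ gadgetArcs2 a t := by
  rwa [hG.arcs, Finset.mem_biUnion] at hp

theorem isGammaCycle_of_isGadgetCycle2 (hG : IsGadgetGraph2 X Y Z T a G) (ht : t ∈ T)
    {l : List ℕ} (hl : IsGadgetCycle2 a t l) : IsGammaCycle G gadgetParams2 l := by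
  have harc : ∀ {p}, p ∈ gadgetArcs2 a t → p ∈ G.arcs := fun hp => hG.gadgetArcs2_subset ht hp
  have hcA := hG.country_a ht
  obtain ⟨hx, hy, hz⟩ := hG.triple_mem t ht
  have hcx := hG.country_eq_zero (v := t.1) (by simp [hx])
  have hcy := hG.country_eq_zero (v := t.2.1) (by simp [hy])
  have hcz := hG.country_eq_zero (v := t.2.2) (by simp [hz])
  have hicl : (2 : ℕ∞) ≤ gadgetParams2.icl := le_rfl
  rcases hl with hl | hl | hl | hl | hl | hl | hl
  all_goals first
    | exact isGammaCycle_of_isRotated_pair G gadgetParams2 hicl (harc (by simp [gadgetArcs2]))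
        (harc (by simp [gadgetArcs2])) (by simp [hcA, hcx, hcy, hcz]) hl
    | exact isGammaCycle_of_isRotated_triple G gadgetParams2 0 (by simp [gadgetParams2])
        (harc (by simp [gadgetArcs2])) (harc (by simp [gadgetArcs2]))
        (harc (by simp [gadgetArcs2])) (by simp [IsNationalTo, hcA]) hl

theorem exists_of_national_arc (hG : IsGadgetGraph2 X Y Z T a G) {u v : ℕ}
    (huv : (u, v) ∈ G.arcs) (hu : G.country u = 0) (hv : G.country v = 0) :
    ∃ t ∈ T, ∃ j ∈ ({1, 3, 5} : Finset (Fin 6)), u = a t j ∧ v = a t (j + 2) := by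
  -- `j + 2` is computed in `Fin 6`, so the arc `a t 5 → a t 1` is the case `j = 5`.
  obtain ⟨t, ht, h⟩ := hG.exists_of_mem_arcs huv
  have hcA := hG.country_a ht
  simp only [gadgetArcs2, List.mem_toFinset, List.mem_cons, List.not_mem_nil, or_false,
    Prod.mk.injEq] at h
  rcases h with ⟨rfl, rfl⟩ | ⟨rfl, rfl⟩ | ⟨rfl, rfl⟩ | ⟨rfl, rfl⟩ | ⟨rfl, rfl⟩ | ⟨rfl, rfl⟩ |
    ⟨rfl, rfl⟩ | ⟨rfl, rfl⟩ | ⟨rfl, rfl⟩ | ⟨rfl, rfl⟩ | ⟨rfl, rfl⟩ | ⟨rfl, rfl⟩ |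
    ⟨rfl, rfl⟩ | ⟨rfl, rfl⟩ | ⟨rfl, rfl⟩
  all_goals first
    | exact ⟨t, ht, _, by decide, rfl, rfl⟩
    | simp [hcA] at hu hv

theorem not_isCycle_national_pair (hG : IsGadgetGraph2 X Y Z T a G) {u v : ℕ}
    (hcyc : IsCycle G [u, v]) (hnat : IsNationalTo G [u, v] 0) : False := by
  obtain ⟨huv, hvu⟩ := (isCycle_pair_iff G).mp hcyc
  obtain ⟨t, ht, j, -, rfl, rfl⟩ :=
    hG.exists_of_national_arc huv (hnat _ (by simp)) (hnat _ (by simp))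
  obtain ⟨t', ht', k, -, hk, hj⟩ :=
    hG.exists_of_national_arc hvu (hnat _ (by simp)) (hnat _ (by simp))
  obtain ⟨rfl, rfl⟩ := hG.inj t ht t' ht' _ _ hk
  have hj_ne : ∀ j : Fin 6, j ≠ j + 2 + 2 := by decide
  exact hj_ne j (hG.inj t ht t ht _ _ hj).2

theorem isGadgetCycle2_of_national_triple (hG : IsGadgetGraph2 X Y Z T a G) {u v w : ℕ}
    (hcyc : IsCycle G [u, v, w]) (hnat : IsNationalTo G [u, v, w] 0) :
    ∃ t ∈ T, IsGadgetCycle2 a t [u, v, w] := by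
  obtain ⟨huv, hvw, -⟩ := (isCycle_triple_iff G).mp hcyc
  obtain ⟨t, ht, j, hj, rfl, rfl⟩ :=
    hG.exists_of_national_arc huv (hnat _ (by simp)) (hnat _ (by simp))
  obtain ⟨t', ht', k, -, hk, rfl⟩ :=
    hG.exists_of_national_arc hvw (hnat _ (by simp)) (hnat _ (by simp))
  obtain ⟨rfl, rfl⟩ := hG.inj t ht t' ht' _ _ hk
  refine ⟨t, ht, Or.inr <| Or.inr <| Or.inr <| Or.inr <| Or.inr <| Or.inr ?_⟩
  simp only [Finset.mem_insert, Finset.mem_singleton] at hj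
  rcases hj with rfl | rfl | rfl
  exacts [⟨0, rfl⟩, ⟨2, rfl⟩, ⟨1, rfl⟩]

theorem isGadgetCycle2_of_international_pair (hG : IsGadgetGraph2 X Y Z T a G) {u v : ℕ}
    (hcyc : IsCycle G [u, v]) (hint : IsInternational G [u, v]) :
    ∃ t ∈ T, IsGadgetCycle2 a t [u, v] := by
  obtain ⟨t, ht, h⟩ := hG.exists_of_mem_arcs ((isCycle_pair_iff G).mp hcyc).1
  refine ⟨t, ht, ?_⟩
  have hcA := hG.country_a ht
  have hnat : ¬ (G.country u = 0 ∧ G.country v = 0) := fun ⟨hu, hv⟩ =>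
    hint ⟨0, by simp [IsNationalTo, hu, hv]⟩
  simp only [gadgetArcs2, List.mem_toFinset, List.mem_cons, List.not_mem_nil, or_false,
    Prod.mk.injEq] at h
  rcases h with ⟨rfl, rfl⟩ | ⟨rfl, rfl⟩ | ⟨rfl, rfl⟩ | ⟨rfl, rfl⟩ | ⟨rfl, rfl⟩ | ⟨rfl, rfl⟩ |
    ⟨rfl, rfl⟩ | ⟨rfl, rfl⟩ | ⟨rfl, rfl⟩ | ⟨rfl, rfl⟩ | ⟨rfl, rfl⟩ | ⟨rfl, rfl⟩ |
    ⟨rfl, rfl⟩ | ⟨rfl, rfl⟩ | ⟨rfl, rfl⟩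
  all_goals first
    | (simp [IsGadgetCycle2, List.isRotated_pair_iff]; done)
    | simp [hcA] at hnat

theorem exists_isGadgetCycle2_of_isGammaCycle (hG : IsGadgetGraph2 X Y Z T a G) {l : List ℕ}
    (h : IsGammaCycle G gadgetParams2 l) : ∃ t ∈ T, IsGadgetCycle2 a t l := by
  obtain ⟨hcyc, ⟨hnat, hlen⟩ | ⟨hint, hlen⟩⟩ := h.gadgetParams2_cases
  · obtain hlen | hlen : l.length = 2 ∨ l.length = 3 := by have := hcyc.1; omega
    · obtain ⟨u, v, rfl⟩ := List.length_eq_two.mp hlen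
      exact (hG.not_isCycle_national_pair hcyc hnat).elim
    · obtain ⟨u, v, w, rfl⟩ := List.length_eq_three.mp hlen
      exact hG.isGadgetCycle2_of_national_triple hcyc hnat
  · obtain ⟨u, v, rfl⟩ := List.length_eq_two.mp hlen
    exact hG.isGadgetCycle2_of_international_pair hcyc hint

end IsGadgetGraph2

theorem gadget2_gamma_cycles_general
    (X Y Z : Finset ℕ) (T : Finset (ℕ × ℕ × ℕ)) (a : ℕ × ℕ × ℕ → Fin 6 → ℕ)
    (hTsub : ∀ t ∈ T, t.1 ∈ X ∧ t.2.1 ∈ Y ∧ t.2.2 ∈ Z)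
    (hfresh : ∀ t ∈ T, ∀ j, a t j ∉ X ∪ Y ∪ Z)
    (hainj : ∀ t ∈ T, ∀ t' ∈ T, ∀ j j', a t j = a t' j' → t = t' ∧ j = j')
    (G : PartGraph 2)
    (harcs : G.arcs = T.biUnion fun t => gadgetArcs2 a t)
    (hcountry : ∀ v, G.country v =
      if ∃ t ∈ T, v = a t 0 ∨ v = a t 2 ∨ v = a t 4 then 1 else 0) :
    ∀ l : List ℕ, IsGammaCycle G gadgetParams2 l ↔
      ∃ t ∈ T,
        l.IsRotated [t.1, a t 0] ∨ l.IsRotated [t.2.1, a t 2] ∨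
        l.IsRotated [t.2.2, a t 4] ∨ l.IsRotated [a t 0, a t 1] ∨
        l.IsRotated [a t 2, a t 3] ∨ l.IsRotated [a t 4, a t 5] ∨
        l.IsRotated [a t 1, a t 3, a t 5] := by
  have hG : IsGadgetGraph2 X Y Z T a G := ⟨hTsub, hfresh, hainj, harcs, hcountry⟩
  exact fun l => ⟨hG.exists_isGadgetCycle2_of_isGammaCycle,
    fun ⟨_, ht, hl⟩ => hG.isGammaCycle_of_isGadgetCycle2 ht hl⟩

/-- In the `icl = 2` gadget construction, the `Γ`-cycles of
`(G, 𝒱)` are exactly, for each triple `tᵢ = (x,y,z) ∈ T`: the six international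
length-2 cycles `⟨x,aᵢ¹⟩, ⟨y,aᵢ³⟩, ⟨z,aᵢ⁵⟩, ⟨aᵢ¹,aᵢ²⟩, ⟨aᵢ³,aᵢ⁴⟩, ⟨aᵢ⁵,aᵢ⁶⟩` and
the national length-3 cycle `⟨aᵢ²,aᵢ⁴,aᵢ⁶⟩` (cycles as lists up to rotation);
in particular every `Γ`-cycle is contained within a single gadget. -/
theorem gadget2_gamma_cycles
    (X Y Z : Finset ℕ) (T : Finset (ℕ × ℕ × ℕ)) (a : ℕ × ℕ × ℕ → Fin 6 → ℕ)
    (hX : X.Nonempty) (hY : Y.Nonempty) (hZ : Z.Nonempty)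
    (hXY : Disjoint X Y) (hXZ : Disjoint X Z) (hYZ : Disjoint Y Z)
    (hT : T.Nonempty) (hTsub : ∀ t ∈ T, t.1 ∈ X ∧ t.2.1 ∈ Y ∧ t.2.2 ∈ Z)
    (hfresh : ∀ t ∈ T, ∀ j, a t j ∉ X ∪ Y ∪ Z)
    (hainj : ∀ t ∈ T, ∀ t' ∈ T, ∀ j j', a t j = a t' j' → t = t' ∧ j = j')
    (G : PartGraph 2)
    (hverts : G.verts = (X ∪ Y ∪ Z) ∪ T.biUnion fun t => Finset.image (a t) Finset.univ)
    (harcs : G.arcs = T.biUnion fun t => gadgetArcs2 a t)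
    (hcountry : ∀ v, G.country v =
      if ∃ t ∈ T, v = a t 0 ∨ v = a t 2 ∨ v = a t 4 then 1 else 0) :
    ∀ l : List ℕ, IsGammaCycle G gadgetParams2 l ↔
      ∃ t ∈ T,
        l.IsRotated [t.1, a t 0] ∨ l.IsRotated [t.2.1, a t 2] ∨
        l.IsRotated [t.2.2, a t 4] ∨ l.IsRotated [a t 0, a t 1] ∨
        l.IsRotated [a t 2, a t 3] ∨ l.IsRotated [a t 4, a t 5] ∨
        l.IsRotated [a t 1, a t 3, a t 5] :=
  gadget2_gamma_cycles_general X Y Z T a hTsub hfresh hainj G harcs hcountry
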